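/- arXiv:math/0507472 — 2 statements merged into one kernel-verified Lean document; each statement's English description precedes it below -/
import Mathlib

section
/- Let S = {(0,0), (0,1), (0,2), (1,0), (1,−1), (1,−2)} ⊆ ℝ². Then ⋃_{i ≥ 0} Tⁱ(S) equals the set ℚ² of all points of ℝ² with both coordinates rational. -/
open Set Filter

noncomputable section

/-- The line through two points in the plane `ℝ × ℝ`. -/
def line (a b : ℝ × ℝ) : AffineSubspace ℝ (ℝ × ℝ) := affineSpan ℝ {a, b}

/-- The intersection operation `T`: the set of all intersection points of pairs of
distinct lines through pairs of distinct points of `S`. -/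
def interT (S : Set (ℝ × ℝ)) : Set (ℝ × ℝ) :=
  {x | ∃ a ∈ S, ∃ b ∈ S, ∃ c ∈ S, ∃ d ∈ S,
    a ≠ b ∧ c ≠ d ∧ line a b ≠ line c d ∧ x ∈ line a b ∧ x ∈ line c d}

/-- The set of points of `ℝ × ℝ` with both coordinates rational. -/
def ratPoints : Set (ℝ × ℝ) := {p | ∃ a b : ℚ, p = ((a : ℝ), (b : ℝ))}

/-!
Every iterate lies in `ℚ²`: two distinct lines through points with coordinates in a subfield `K`
of `ℝ` meet in a point with coordinates in `K`.

Conversely, each of the six points lies on two distinct lines through the others, so the iterates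
increase and their union `𝒢` is closed under `T`. We build `ℚ²` inside `𝒢` from the vertical
lines `x = 0` and `x = 1`. Projecting between them from the axis points `(1/2, 0)` and `(1/3, 0)`
gives `(0, a) ↦ (1, -a)` and `(1, c) ↦ (0, -c/2)`, hence `(1, -1/2) ∈ 𝒢`. Reflecting `(0, a)` in
`(1, c)` lands on the line `x = 2`, which contains `(2, -2)` and `(2, -4)`; reflecting back in
`(1, c')` translates by `2 (c' - c)`, so `c, c' ∈ {0, -1/2}` give `a ↦ a ± 1` and all `(0, n)`,
`(1, n)` with `n ∈ ℤ`. The line through `(0, n)` and `(1, n - m)` meets the axis at `(n / m, 0)`;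
projecting from `(1, -1)` then gives every `(0, q)` and `(1, q)` with `q ∈ ℚ`, and `(p, q)` is the
meet of the lines through `(0, q), (1, q)` and `(0, q - p), (1, q - p + 1)`.
-/

def wedge (u v : ℝ × ℝ) : ℝ := u.1 * v.2 - u.2 * v.1

lemma exists_smul_eq_of_wedge_eq_zero {u w : ℝ × ℝ} (hu : u ≠ 0) (h : wedge u w = 0) :
    ∃ t : ℝ, t • u = w := by
  unfold wedge at h
  by_cases h1 : u.1 = 0
  · have h2 : u.2 ≠ 0 := fun h2 => hu (Prod.ext h1 h2)
    have hw : w.1 = 0 := by simpa [h1, h2] using h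
    exact ⟨w.2 / u.2, Prod.ext (by simp [h1, hw]) (by simp [h2])⟩
  · refine ⟨w.1 / u.1, Prod.ext (by simp [h1]) ?_⟩
    simp only [Prod.smul_snd, smul_eq_mul]
    field_simp
    linear_combination -h

lemma mem_line_iff {a b x : ℝ × ℝ} : x ∈ line a b ↔ ∃ t : ℝ, t • (b - a) + a = x := by
  simp [line, mem_affineSpan_pair_iff_exists_lineMap_eq, AffineMap.lineMap_apply_module']

lemma mem_line_iff_wedge {a b x : ℝ × ℝ} (hab : a ≠ b) :
    x ∈ line a b ↔ wedge (b - a) (x - a) = 0 := by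
  rw [mem_line_iff]
  constructor
  · rintro ⟨t, rfl⟩
    simp only [wedge, add_sub_cancel_right, Prod.smul_fst, Prod.smul_snd, smul_eq_mul]
    ring
  · intro h
    obtain ⟨t, ht⟩ := exists_smul_eq_of_wedge_eq_zero (sub_ne_zero.2 hab.symm) h
    exact ⟨t, by rw [ht, sub_add_cancel]⟩

lemma line_le_of_wedge_eq_zero {a b c d x : ℝ × ℝ} (hcd : c ≠ d) (hxab : x ∈ line a b)
    (hxcd : x ∈ line c d) (h : wedge (d - c) (b - a) = 0) : line a b ≤ line c d := by
  obtain ⟨t, rfl⟩ := mem_line_iff.1 hxab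
  rw [mem_line_iff_wedge hcd] at hxcd
  have ha : a ∈ line c d := by
    rw [mem_line_iff_wedge hcd]
    simp only [wedge, Prod.fst_sub, Prod.snd_sub, Prod.fst_add, Prod.snd_add, Prod.smul_fst,
      Prod.smul_snd, smul_eq_mul] at h hxcd ⊢
    linear_combination hxcd - t * h
  have hb : b ∈ line c d := by
    rw [mem_line_iff_wedge hcd] at ha ⊢
    simp only [wedge, Prod.fst_sub, Prod.snd_sub] at h ha ⊢
    linear_combination ha + h
  exact affineSpan_le.2 (Set.insert_subset_iff.2 ⟨ha, Set.singleton_subset_iff.2 hb⟩)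

lemma line_ne_of_wedge_ne_zero {a b c d : ℝ × ℝ} (h : wedge (b - a) (d - c) ≠ 0) :
    line a b ≠ line c d := by
  intro hl
  have hab : a ≠ b := by rintro rfl; simp [wedge] at h
  have hc : c ∈ line a b := hl ▸ left_mem_affineSpan_pair ℝ c d
  have hd : d ∈ line a b := hl ▸ right_mem_affineSpan_pair ℝ c d
  rw [mem_line_iff_wedge hab] at hc hd
  simp only [wedge, Prod.fst_sub, Prod.snd_sub] at h hc hd
  exact h (by linear_combination hd - hc)

lemma interT_mono : Monotone interT := by
  rintro S S' h x ⟨a, ha, b, hb, c, hc, d, hd, hx⟩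
  exact ⟨a, h ha, b, h hb, c, h hc, d, h hd, hx⟩

lemma mem_interT_of_wedge_ne_zero {S : Set (ℝ × ℝ)} {p q r : ℝ × ℝ} (hp : p ∈ S) (hq : q ∈ S)
    (hr : r ∈ S) (h : wedge (q - p) (r - p) ≠ 0) : p ∈ interT S := by
  refine ⟨p, hp, q, hq, p, hp, r, hr, ?_, ?_, line_ne_of_wedge_ne_zero h,
    left_mem_affineSpan_pair ℝ p q, left_mem_affineSpan_pair ℝ p r⟩
  · rintro rfl; simp [wedge] at h
  · rintro rfl; simp [wedge] at h

lemma interT_prod_subset (K : Subfield ℝ) :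
    interT ((K : Set ℝ) ×ˢ (K : Set ℝ)) ⊆ (K : Set ℝ) ×ˢ (K : Set ℝ) := by
  rintro x ⟨a, ha, b, hb, c, hc, d, hd, hab, hcd, hne, hxab, hxcd⟩
  have hsub {p q : ℝ × ℝ} (hp : p ∈ (K : Set ℝ) ×ˢ (K : Set ℝ))
      (hq : q ∈ (K : Set ℝ) ×ˢ (K : Set ℝ)) : p - q ∈ (K : Set ℝ) ×ˢ (K : Set ℝ) :=
    ⟨K.sub_mem hp.1 hq.1, K.sub_mem hp.2 hq.2⟩
  have hwedge {u v : ℝ × ℝ} (hu : u ∈ (K : Set ℝ) ×ˢ (K : Set ℝ))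
      (hv : v ∈ (K : Set ℝ) ×ˢ (K : Set ℝ)) : wedge u v ∈ K :=
    K.sub_mem (K.mul_mem hu.1 hv.2) (K.mul_mem hu.2 hv.1)
  have hdet : wedge (d - c) (b - a) ≠ 0 := fun h =>
    hne (le_antisymm (line_le_of_wedge_eq_zero hcd hxab hxcd h)
      (line_le_of_wedge_eq_zero hab hxcd hxab (by simp only [wedge] at h ⊢; linarith)))
  obtain ⟨t, rfl⟩ := mem_line_iff.1 hxab
  rw [mem_line_iff_wedge hcd] at hxcd
  -- Cramer's rule
  have ht : t = wedge (d - c) (c - a) / wedge (d - c) (b - a) := by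
    rw [eq_div_iff hdet]
    simp only [wedge, Prod.fst_sub, Prod.snd_sub, Prod.fst_add, Prod.snd_add, Prod.smul_fst,
      Prod.smul_snd, smul_eq_mul] at hxcd ⊢
    linear_combination hxcd
  have htK : t ∈ K :=
    ht ▸ K.div_mem (hwedge (hsub hd hc) (hsub hc ha)) (hwedge (hsub hd hc) (hsub hb ha))
  exact ⟨K.add_mem (K.mul_mem htK (hsub hb ha).1) ha.1,
    K.add_mem (K.mul_mem htK (hsub hb ha).2) ha.2⟩

lemma ratPoints_eq_prod :
    ratPoints = ((Rat.castHom ℝ).fieldRange : Set ℝ) ×ˢ ((Rat.castHom ℝ).fieldRange : Set ℝ) := by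
  ext ⟨x, y⟩
  simp [ratPoints, eq_comm]

def interTClosure (S : Set (ℝ × ℝ)) : Set (ℝ × ℝ) := ⋃ n, interT^[n] S

lemma subset_interTClosure (S : Set (ℝ × ℝ)) : S ⊆ interTClosure S :=
  subset_iUnion (fun n => interT^[n] S) 0

lemma interTClosure_subset {S P : Set (ℝ × ℝ)} (hS : S ⊆ P) (hP : interT P ⊆ P) :
    interTClosure S ⊆ P := by
  refine iUnion_subset fun n => ?_
  induction n with
  | zero => exact hS
  | succ n ih =>
    rw [Function.iterate_succ_apply']
    exact (interT_mono ih).trans hP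

lemma interT_interTClosure_subset {S : Set (ℝ × ℝ)} (h : S ⊆ interT S) :
    interT (interTClosure S) ⊆ interTClosure S := by
  have hmono : Monotone fun n => interT^[n] S := interT_mono.monotone_iterate_of_le_map h
  rintro x ⟨a, ha, b, hb, c, hc, d, hd, hx⟩
  simp only [interTClosure, mem_iUnion] at ha hb hc hd ⊢
  obtain ⟨i, ha⟩ := ha
  obtain ⟨j, hb⟩ := hb
  obtain ⟨k, hc⟩ := hc
  obtain ⟨l, hd⟩ := hd
  refine ⟨i + j + k + l + 1, ?_⟩
  rw [Function.iterate_succ_apply']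
  exact ⟨a, hmono (by omega) ha, b, hmono (by omega) hb, c, hmono (by omega) hc,
    d, hmono (by omega) hd, hx⟩

section Closed

variable {U : Set (ℝ × ℝ)}

lemma mem_of_wedge_ne_zero (hU : interT U ⊆ U) {a b c d x : ℝ × ℝ} (ha : a ∈ U) (hb : b ∈ U)
    (hc : c ∈ U) (hd : d ∈ U) (h : wedge (b - a) (d - c) ≠ 0)
    (hxab : wedge (b - a) (x - a) = 0) (hxcd : wedge (d - c) (x - c) = 0) : x ∈ U := by
  have hab : a ≠ b := by rintro rfl; simp [wedge] at h
  have hcd : c ≠ d := by rintro rfl; simp [wedge] at h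
  exact hU ⟨a, ha, b, hb, c, hc, d, hd, hab, hcd, line_ne_of_wedge_ne_zero h,
    (mem_line_iff_wedge hab).2 hxab, (mem_line_iff_wedge hcd).2 hxcd⟩

lemma mem_of_inter_vertical (hU : interT U ⊆ U) {v r r' y : ℝ} {p q : ℝ × ℝ}
    (hr : (v, r) ∈ U) (hr' : (v, r') ∈ U) (hrr' : r ≠ r') (hp : p ∈ U) (hq : q ∈ U)
    (hpq : p.1 ≠ q.1) (hy : (y - p.2) * (q.1 - p.1) = (v - p.1) * (q.2 - p.2)) :
    (v, y) ∈ U := by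
  refine mem_of_wedge_ne_zero hU hr hr' hp hq ?_ ?_ ?_ <;>
    simp only [wedge, Prod.fst_sub, Prod.snd_sub, sub_self, zero_mul, zero_sub, neg_eq_zero,
      mul_zero, ne_eq, mul_eq_zero, not_or]
  · exact ⟨sub_ne_zero.2 hrr'.symm, sub_ne_zero.2 hpq.symm⟩
  · linear_combination hy

lemma mem_of_inter_lines_zero_one (hU : interT U ⊆ U) {a c b d x y : ℝ}
    (ha : ((0 : ℝ), a) ∈ U) (hc : ((1 : ℝ), c) ∈ U) (hb : ((0 : ℝ), b) ∈ U)
    (hd : ((1 : ℝ), d) ∈ U) (hs : c - a ≠ d - b) (hx : x * ((c - a) - (d - b)) = b - a)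
    (hy : y = a + x * (c - a)) : (x, y) ∈ U := by
  refine mem_of_wedge_ne_zero hU ha hc hb hd ?_ ?_ ?_ <;>
    simp only [wedge, Prod.fst_sub, Prod.snd_sub, sub_zero]
  · intro h; exact hs (by linarith)
  · rw [hy]; ring
  · rw [hy]; linear_combination hx

end Closed

def sixPoints : Set (ℝ × ℝ) := {((0 : ℝ), (0 : ℝ)), (0, 1), (0, 2), (1, 0), (1, -1), (1, -2)}

lemma sixPoints_subset_interT : sixPoints ⊆ interT sixPoints := by
  rintro ⟨x, y⟩ hp
  have hx : x = 0 ∨ x = 1 := by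
    simp only [sixPoints, mem_insert_iff, mem_singleton_iff, Prod.mk.injEq] at hp
    tauto
  rcases hx with rfl | rfl
  · exact mem_interT_of_wedge_ne_zero (q := (1, -1)) (r := (1, -2)) hp (by simp [sixPoints])
      (by simp [sixPoints]) (by norm_num [wedge])
  · exact mem_interT_of_wedge_ne_zero (q := (0, 0)) (r := (0, 1)) hp (by simp [sixPoints])
      (by simp [sixPoints]) (by norm_num [wedge])

local notation "𝒢" => interTClosure sixPoints

lemma interT_generated_subset : interT 𝒢 ⊆ 𝒢 :=
  interT_interTClosure_subset sixPoints_subset_interT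

lemma mem_generated_of_mem_sixPoints {p : ℝ × ℝ} (hp : p ∈ sixPoints := by simp [sixPoints]) :
    p ∈ 𝒢 :=
  subset_interTClosure sixPoints hp

lemma half_zero_mem : ((1 / 2 : ℝ), (0 : ℝ)) ∈ 𝒢 :=
  mem_of_inter_lines_zero_one interT_generated_subset (a := 1) (c := -1) (b := 0) (d := 0)
    mem_generated_of_mem_sixPoints mem_generated_of_mem_sixPoints mem_generated_of_mem_sixPoints
    mem_generated_of_mem_sixPoints (by norm_num) (by norm_num) (by norm_num)

lemma third_zero_mem : ((1 / 3 : ℝ), (0 : ℝ)) ∈ 𝒢 :=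
  mem_of_inter_lines_zero_one interT_generated_subset (a := 1) (c := -2) (b := 0) (d := 0)
    mem_generated_of_mem_sixPoints mem_generated_of_mem_sixPoints mem_generated_of_mem_sixPoints
    mem_generated_of_mem_sixPoints (by norm_num) (by norm_num) (by norm_num)

lemma two_neg_two_mem : ((2 : ℝ), (-2 : ℝ)) ∈ 𝒢 :=
  mem_of_inter_lines_zero_one interT_generated_subset (a := 0) (c := -1) (b := 2) (d := 0)
    mem_generated_of_mem_sixPoints mem_generated_of_mem_sixPoints mem_generated_of_mem_sixPoints
    mem_generated_of_mem_sixPoints (by norm_num) (by norm_num) (by norm_num)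

lemma two_neg_four_mem : ((2 : ℝ), (-4 : ℝ)) ∈ 𝒢 :=
  mem_of_inter_lines_zero_one interT_generated_subset (a := 0) (c := -2) (b := 2) (d := -1)
    mem_generated_of_mem_sixPoints mem_generated_of_mem_sixPoints mem_generated_of_mem_sixPoints
    mem_generated_of_mem_sixPoints (by norm_num) (by norm_num) (by norm_num)

lemma one_neg_mem {a : ℝ} (ha : ((0 : ℝ), a) ∈ 𝒢) : ((1 : ℝ), -a) ∈ 𝒢 :=
  mem_of_inter_vertical interT_generated_subset (r := 0) (r' := -1)
    mem_generated_of_mem_sixPoints mem_generated_of_mem_sixPoints (by norm_num) ha half_zero_mem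
    (by norm_num) (by ring)

lemma zero_neg_half_mem {c : ℝ} (hc : ((1 : ℝ), c) ∈ 𝒢) : ((0 : ℝ), -c / 2) ∈ 𝒢 :=
  mem_of_inter_vertical interT_generated_subset (r := 0) (r' := 1)
    mem_generated_of_mem_sixPoints mem_generated_of_mem_sixPoints (by norm_num) hc third_zero_mem
    (by norm_num) (by ring)

lemma one_neg_half_mem : ((1 : ℝ), (-1 / 2 : ℝ)) ∈ 𝒢 := by
  convert one_neg_mem (zero_neg_half_mem (c := -1) mem_generated_of_mem_sixPoints) using 2
  norm_num

lemma two_reflect_mem {a c : ℝ} (ha : ((0 : ℝ), a) ∈ 𝒢) (hc : ((1 : ℝ), c) ∈ 𝒢) :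
    ((2 : ℝ), 2 * c - a) ∈ 𝒢 :=
  mem_of_inter_vertical interT_generated_subset two_neg_two_mem two_neg_four_mem (by norm_num)
    ha hc (by norm_num) (by ring)

lemma zero_reflect_mem {e c : ℝ} (he : ((2 : ℝ), e) ∈ 𝒢) (hc : ((1 : ℝ), c) ∈ 𝒢) :
    ((0 : ℝ), 2 * c - e) ∈ 𝒢 :=
  mem_of_inter_vertical interT_generated_subset (r := 0) (r' := 1)
    mem_generated_of_mem_sixPoints mem_generated_of_mem_sixPoints (by norm_num) he hc
    (by norm_num) (by ring)

lemma zero_add_one_mem {a : ℝ} (ha : ((0 : ℝ), a) ∈ 𝒢) : ((0 : ℝ), a + 1) ∈ 𝒢 := by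
  convert zero_reflect_mem (two_reflect_mem ha one_neg_half_mem)
    (mem_generated_of_mem_sixPoints (p := (1, 0))) using 2
  ring

lemma zero_sub_one_mem {a : ℝ} (ha : ((0 : ℝ), a) ∈ 𝒢) : ((0 : ℝ), a - 1) ∈ 𝒢 := by
  convert zero_reflect_mem (two_reflect_mem ha (mem_generated_of_mem_sixPoints (p := (1, 0))))
    one_neg_half_mem using 2
  ring

lemma zero_intCast_mem (n : ℤ) : ((0 : ℝ), (n : ℝ)) ∈ 𝒢 := by
  induction n using Int.induction_on with
  | zero => simpa using mem_generated_of_mem_sixPoints (p := (0, 0))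
  | succ n ih => simpa using zero_add_one_mem ih
  | pred n ih => simpa using zero_sub_one_mem ih

lemma one_intCast_mem (n : ℤ) : ((1 : ℝ), (n : ℝ)) ∈ 𝒢 := by
  simpa using one_neg_mem (zero_intCast_mem (-n))

lemma ratCast_zero_mem (q : ℚ) : ((q : ℝ), (0 : ℝ)) ∈ 𝒢 := by
  have hq : (q : ℝ) * q.den = q.num := by exact_mod_cast q.mul_den_eq_num
  refine mem_of_inter_lines_zero_one interT_generated_subset (zero_intCast_mem q.num)
    (c := q.num - q.den) ?_ (zero_intCast_mem 0) (one_intCast_mem 0) ?_ ?_ ?_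
  · exact_mod_cast one_intCast_mem (q.num - q.den)
  · simp
  · linear_combination -hq
  · linear_combination hq

lemma zero_ratCast_mem (q : ℚ) : ((0 : ℝ), (q : ℝ)) ∈ 𝒢 := by
  rcases eq_or_ne q (-1) with rfl | hq
  · exact_mod_cast zero_intCast_mem (-1)
  have hq' : (q : ℝ) + 1 ≠ 0 := by exact_mod_cast fun h => hq (by linarith)
  refine mem_of_inter_vertical interT_generated_subset (r := 0) (r' := 1)
    mem_generated_of_mem_sixPoints mem_generated_of_mem_sixPoints (by norm_num)
    (mem_generated_of_mem_sixPoints (p := (1, -1))) (ratCast_zero_mem (q / (q + 1))) ?_ ?_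
  · push_cast
    rw [ne_eq, eq_div_iff hq']
    linarith
  · push_cast
    field_simp
    ring

lemma one_ratCast_mem (q : ℚ) : ((1 : ℝ), (q : ℝ)) ∈ 𝒢 := by
  simpa using one_neg_mem (zero_ratCast_mem (-q))

lemma ratPoints_subset_generated : ratPoints ⊆ 𝒢 := by
  rintro _ ⟨p, q, rfl⟩
  refine mem_of_inter_lines_zero_one interT_generated_subset (zero_ratCast_mem q)
    (one_ratCast_mem q) (b := q - p) (d := q - p + 1) ?_ ?_ (by norm_num) (by ring) (by ring)
  · exact_mod_cast zero_ratCast_mem (q - p)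
  · exact_mod_cast one_ratCast_mem (q - p + 1)

/-- Iterating `T` on `{(0,0), (0,1), (0,2), (1,0), (1,-1), (1,-2)}` generates all of `ℚ²`. -/
theorem iUnion_interT_sixPoints'_eq_ratPoints :
    (⋃ i, interT^[i]
      ({((0 : ℝ), (0 : ℝ)), (0, 1), (0, 2), (1, 0), (1, -1), (1, -2)} : Set (ℝ × ℝ))) =
      ratPoints := by
  show 𝒢 = ratPoints
  refine Subset.antisymm ?_ ratPoints_subset_generated
  rw [ratPoints_eq_prod]
  refine interTClosure_subset ?_ (interT_prod_subset _)
  generalize (Rat.castHom ℝ).fieldRange = K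
  simp [sixPoints, insert_subset_iff, ofNat_mem]
end
end

section
/- Let S be the set of points (x, y) ∈ ℝ² with x² + y² = 1 and both x and y rational. Then T(S) equals the set ℚ² of all points of ℝ² with both coordinates rational. -/
/-!
A point of `T(S)` lies on two distinct lines through rational points; both have equations
with rational coefficients, so the point is rational by Cramer's rule (if the determinant
vanished, the two lines would be parallel with a common point, hence equal).

Conversely, let `p` be rational and `a` a rational point of the circle such that `p` is not on
the tangent at `a`. The line `ap` meets the circle in a second point `b`, which is rational: `b`
is the other root of a quadratic with rational coefficients and the rational root `a`. Two such
chords through `p`, from base points `a`, `c` not collinear with `p`, show `p ∈ T(S)`.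
-/

open Set Filter

noncomputable section

section Cross

def cross {R : Type*} [CommRing R] (v w : R × R) : R := v.1 * w.2 - v.2 * w.1

variable {K : Type*} [Field K]

lemma exists_eq_smul_of_cross_eq_zero {v w : K × K} (hv : v ≠ 0) (h : cross v w = 0) :
    ∃ t : K, w = t • v := by
  unfold cross at h
  rcases eq_or_ne v.1 0 with hv₁ | hv₁
  · have hv₂ : v.2 ≠ 0 := fun hv₂ => hv (Prod.ext hv₁ hv₂)
    have hw₁ : w.1 = 0 := by simpa [hv₁, hv₂] using h
    refine ⟨w.2 / v.2, Prod.ext ?_ ?_⟩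
    · simp [hv₁, hw₁]
    · exact (div_mul_cancel₀ _ hv₂).symm
  · refine ⟨w.1 / v.1, Prod.ext ?_ ?_⟩
    · exact (div_mul_cancel₀ _ hv₁).symm
    · simp only [Prod.smul_snd, smul_eq_mul]
      field_simp
      linear_combination h

lemma cross_eq_zero_of_cross_eq_zero {u v w : K × K} (hu : u ≠ 0) (hv : cross u v = 0)
    (hw : cross u w = 0) : cross v w = 0 := by
  obtain ⟨s, rfl⟩ := exists_eq_smul_of_cross_eq_zero hu hv
  obtain ⟨t, rfl⟩ := exists_eq_smul_of_cross_eq_zero hu hw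
  simp only [cross, Prod.smul_fst, Prod.smul_snd, smul_eq_mul]
  ring

/-- Cramer's rule for the lines `{x | cross v (x - a) = 0}` and `{x | cross w (x - c) = 0}`. -/
lemma eq_add_smul_of_cross_eq_zero {a c v w x : K × K} (hvw : cross v w ≠ 0)
    (ha : cross v (x - a) = 0) (hc : cross w (x - c) = 0) :
    x = a + (cross (c - a) w / cross v w) • v := by
  have key : cross v w • (x - a) = cross (c - a) w • v := by
    simp only [cross, Prod.fst_sub, Prod.snd_sub] at ha hc
    ext
    · simp only [cross, Prod.smul_fst, Prod.fst_sub, Prod.snd_sub, smul_eq_mul]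
      linear_combination w.1 * ha - v.1 * hc
    · simp only [cross, Prod.smul_snd, Prod.fst_sub, Prod.snd_sub, smul_eq_mul]
      linear_combination w.2 * ha - v.2 * hc
  rw [div_eq_inv_mul, mul_smul, ← key, smul_smul, inv_mul_cancel₀ hvw, one_smul, add_sub_cancel]

end Cross

section Line

lemma direction_line (a b : ℝ × ℝ) : (line a b).direction = ℝ ∙ (b - a) := by
  rw [line, direction_affineSpan, vectorSpan_pair_rev, vsub_eq_sub]

lemma mem_line_iff_cross {a b x : ℝ × ℝ} (hab : a ≠ b) :
    x ∈ line a b ↔ cross (b - a) (x - a) = 0 := by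
  rw [line, ← AffineSubspace.vsub_right_mem_direction_iff_mem (left_mem_affineSpan_pair ℝ a b) x,
    ← line, direction_line, vsub_eq_sub, Submodule.mem_span_singleton]
  constructor
  · rintro ⟨t, ht⟩
    rw [← ht]
    simp only [cross, Prod.smul_fst, Prod.smul_snd, smul_eq_mul]
    ring
  · intro h
    obtain ⟨t, ht⟩ := exists_eq_smul_of_cross_eq_zero (sub_ne_zero.mpr hab.symm) h
    exact ⟨t, ht.symm⟩

lemma line_eq_of_cross_eq_zero {a b c d x : ℝ × ℝ} (hab : a ≠ b) (hcd : c ≠ d)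
    (hxab : x ∈ line a b) (hxcd : x ∈ line c d) (h : cross (b - a) (d - c) = 0) :
    line a b = line c d := by
  refine AffineSubspace.ext_of_direction_eq ?_ ⟨x, hxab, hxcd⟩
  obtain ⟨t, ht⟩ := exists_eq_smul_of_cross_eq_zero (sub_ne_zero.mpr hab.symm) h
  have ht₀ : t ≠ 0 := by
    rintro rfl
    exact hcd.symm (sub_eq_zero.mp (by simpa using ht))
  rw [direction_line, direction_line, ht, Submodule.span_singleton_smul_eq ht₀.isUnit]

end Line

def ratCastPoint (q : ℚ × ℚ) : ℝ × ℝ := ((q.1 : ℝ), (q.2 : ℝ))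

lemma ratCastPoint_injective : Function.Injective ratCastPoint := by
  intro p q h
  simp only [ratCastPoint, Prod.mk.injEq, Rat.cast_inj] at h
  exact Prod.ext h.1 h.2

lemma ratCastPoint_sub (p q : ℚ × ℚ) :
    ratCastPoint (p - q) = ratCastPoint p - ratCastPoint q := by
  simp [ratCastPoint]

lemma cross_ratCastPoint (v w : ℚ × ℚ) :
    cross (ratCastPoint v) (ratCastPoint w) = ((cross v w : ℚ) : ℝ) := by
  simp [cross, ratCastPoint]

lemma mem_ratPoints_iff {x : ℝ × ℝ} : x ∈ ratPoints ↔ ∃ q, x = ratCastPoint q :=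
  ⟨fun ⟨a, b, h⟩ => ⟨(a, b), h⟩, fun ⟨q, h⟩ => ⟨q.1, q.2, h⟩⟩

lemma ratCastPoint_mem_line_iff {a b x : ℚ × ℚ} (hab : a ≠ b) :
    ratCastPoint x ∈ line (ratCastPoint a) (ratCastPoint b) ↔ cross (b - a) (x - a) = 0 := by
  rw [mem_line_iff_cross (ratCastPoint_injective.ne hab), ← ratCastPoint_sub, ← ratCastPoint_sub,
    cross_ratCastPoint, Rat.cast_eq_zero]

lemma mem_ratPoints_of_mem_line_of_mem_line {a b c d x : ℝ × ℝ} (ha : a ∈ ratPoints)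
    (hb : b ∈ ratPoints) (hc : c ∈ ratPoints) (hd : d ∈ ratPoints) (hab : a ≠ b) (hcd : c ≠ d)
    (hne : line a b ≠ line c d) (hxab : x ∈ line a b) (hxcd : x ∈ line c d) : x ∈ ratPoints := by
  have hcross : cross (b - a) (d - c) ≠ 0 := fun h =>
    hne (line_eq_of_cross_eq_zero hab hcd hxab hxcd h)
  have hx := eq_add_smul_of_cross_eq_zero hcross ((mem_line_iff_cross hab).mp hxab)
    ((mem_line_iff_cross hcd).mp hxcd)
  obtain ⟨a, rfl⟩ := mem_ratPoints_iff.mp ha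
  obtain ⟨b, rfl⟩ := mem_ratPoints_iff.mp hb
  obtain ⟨c, rfl⟩ := mem_ratPoints_iff.mp hc
  obtain ⟨d, rfl⟩ := mem_ratPoints_iff.mp hd
  refine mem_ratPoints_iff.mpr ⟨a + (cross (c - a) (d - c) / cross (b - a) (d - c)) • (b - a), ?_⟩
  rw [hx]
  simp [ratCastPoint, cross]

lemma interT_subset_ratPoints {S : Set (ℝ × ℝ)} (hS : S ⊆ ratPoints) : interT S ⊆ ratPoints := by
  rintro x ⟨a, ha, b, hb, c, hc, d, hd, hab, hcd, hne, hxab, hxcd⟩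
  exact mem_ratPoints_of_mem_line_of_mem_line (hS ha) (hS hb) (hS hc) (hS hd) hab hcd hne
    hxab hxcd

section Circle

variable {K : Type*} [Field K] [LinearOrder K] [IsStrictOrderedRing K]

/-- `b` is the second intersection of the unit circle with the line `ap`; the hypothesis
`a.1 * p.1 + a.2 * p.2 ≠ 1` says that `p` is not on the tangent at `a`. -/
lemma exists_chord_through {a p : K × K} (ha : a.1 ^ 2 + a.2 ^ 2 = 1)
    (hap : a.1 * p.1 + a.2 * p.2 ≠ 1) :
    ∃ b : K × K, b.1 ^ 2 + b.2 ^ 2 = 1 ∧ b ≠ a ∧ cross (b - a) (p - a) = 0 := by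
  set z := p - a with hz_def
  have hz : z ≠ 0 := by
    intro hz
    obtain rfl : p = a := sub_eq_zero.mp hz
    exact hap (by linear_combination ha)
  have hN : z.1 ^ 2 + z.2 ^ 2 ≠ 0 := by
    intro hN
    obtain ⟨h₁, h₂⟩ := (add_eq_zero_iff_of_nonneg (sq_nonneg _) (sq_nonneg _)).mp hN
    exact hz (Prod.ext (pow_eq_zero_iff two_ne_zero |>.mp h₁)
      (pow_eq_zero_iff two_ne_zero |>.mp h₂))
  have hA : a.1 * z.1 + a.2 * z.2 ≠ 0 := by
    have hAp : a.1 * z.1 + a.2 * z.2 = (a.1 * p.1 + a.2 * p.2) - 1 := by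
      simp only [hz_def, Prod.fst_sub, Prod.snd_sub]
      linear_combination -ha
    rw [hAp]
    exact sub_ne_zero.mpr hap
  set t := -2 * (a.1 * z.1 + a.2 * z.2) / (z.1 ^ 2 + z.2 ^ 2)
  have ht : t * (z.1 ^ 2 + z.2 ^ 2) = -2 * (a.1 * z.1 + a.2 * z.2) := div_mul_cancel₀ _ hN
  have ht₀ : t ≠ 0 := div_ne_zero (mul_ne_zero (by norm_num) hA) hN
  refine ⟨a + t • z, ?_, ?_, ?_⟩
  · simp only [Prod.fst_add, Prod.snd_add, Prod.smul_fst, Prod.smul_snd, smul_eq_mul]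
    linear_combination ha + t * ht
  · simpa using smul_ne_zero ht₀ hz
  · simp only [add_sub_cancel_left, cross, Prod.smul_fst, Prod.smul_snd, smul_eq_mul]
    ring

lemma exists_sq_eq_one_mul_nonpos (u : K) : ∃ s : K, s ^ 2 = 1 ∧ s * u ≤ 0 := by
  rcases le_total u 0 with hu | hu
  · exact ⟨1, by norm_num, by linarith⟩
  · exact ⟨-1, by norm_num, by linarith⟩

/-- Take `a = (s, 0)` and `c = (0, r)` with `s p.1, r p.2 ≤ 0`; then
`r s · cross (c - a) (p - a) = 1 - s p.1 - r p.2 ≥ 1`. -/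
lemma exists_circle_pair_not_collinear (p : K × K) :
    ∃ a c : K × K, a.1 ^ 2 + a.2 ^ 2 = 1 ∧ c.1 ^ 2 + c.2 ^ 2 = 1 ∧
      a.1 * p.1 + a.2 * p.2 ≠ 1 ∧ c.1 * p.1 + c.2 * p.2 ≠ 1 ∧ cross (c - a) (p - a) ≠ 0 := by
  obtain ⟨s, hs, hsp⟩ := exists_sq_eq_one_mul_nonpos p.1
  obtain ⟨r, hr, hrp⟩ := exists_sq_eq_one_mul_nonpos p.2
  refine ⟨(s, 0), (0, r), by simpa using hs, by simpa using hr, ?_, ?_, ?_⟩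
  · simp only [zero_mul, add_zero]; linarith
  · simp only [zero_mul, zero_add]; linarith
  · intro h
    have hrs : r * s * cross ((0, r) - (s, 0)) (p - (s, 0)) = 1 - s * p.1 - r * p.2 := by
      simp only [cross, Prod.fst_sub, Prod.snd_sub]
      linear_combination (r ^ 2 - r * p.2) * hs + (1 - s * p.1) * hr
    rw [h, mul_zero] at hrs
    linarith

end Circle

def rationalCircle : Set (ℝ × ℝ) := {p | p.1 ^ 2 + p.2 ^ 2 = 1 ∧ p ∈ ratPoints}

lemma ratCastPoint_mem_rationalCircle {q : ℚ × ℚ} (hq : q.1 ^ 2 + q.2 ^ 2 = 1) :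
    ratCastPoint q ∈ rationalCircle :=
  ⟨by simp only [ratCastPoint]; exact_mod_cast hq, mem_ratPoints_iff.mpr ⟨q, rfl⟩⟩

lemma ratPoints_subset_interT_rationalCircle : ratPoints ⊆ interT rationalCircle := by
  intro x hx
  obtain ⟨p, rfl⟩ := mem_ratPoints_iff.mp hx
  obtain ⟨a, c, ha, hc, hap, hcp, hacp⟩ := exists_circle_pair_not_collinear p
  obtain ⟨b, hb, hba, hpab⟩ := exists_chord_through ha hap
  obtain ⟨d, hd, hdc, hpcd⟩ := exists_chord_through hc hcp
  refine ⟨_, ratCastPoint_mem_rationalCircle ha, _, ratCastPoint_mem_rationalCircle hb,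
    _, ratCastPoint_mem_rationalCircle hc, _, ratCastPoint_mem_rationalCircle hd,
    ratCastPoint_injective.ne hba.symm, ratCastPoint_injective.ne hdc.symm, fun hl => ?_,
    (ratCastPoint_mem_line_iff hba.symm).mpr hpab, (ratCastPoint_mem_line_iff hdc.symm).mpr hpcd⟩
  have hcab : cross (b - a) (c - a) = 0 :=
    (ratCastPoint_mem_line_iff hba.symm).mp (hl ▸ left_mem_affineSpan_pair ℝ _ _)
  exact hacp (cross_eq_zero_of_cross_eq_zero (sub_ne_zero.mpr hba) hcab hpab)

/-- If `S` is the set of rational points on the unit circle, then `T(S) = ℚ²`. -/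
theorem interT_rationalCircle_eq_ratPoints :
    interT {p : ℝ × ℝ | p.1 ^ 2 + p.2 ^ 2 = 1 ∧ p ∈ ratPoints} = ratPoints :=
  (interT_subset_ratPoints fun _ hp => hp.2).antisymm ratPoints_subset_interT_rationalCircle
end
end
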